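/- Let a, b ∈ ℝ³ be unit vectors with a × b ≠ 0, and let t ∈ ℝ³. Suppose the two rays intersect: there exist λ₀ > 0 and λ₁ > 0 with t + λ₀·a = λ₁·b. Then the unweighted alternative midpoint recovers the intersection point: (1/2)·(t + (‖b × t‖/‖a × b‖)·a + (‖a × t‖/‖a × b‖)·b) = λ₁·b. -/

import Mathlib

/-! Writing `t = l₁ • b - l₀ • a`, crossing with `a` and with `b` gives `a × t = l₁ • (a × b)` and
`b × t = l₀ • (a × b)`, so the two norm ratios are exactly `l₁` and `l₀` (both positive), and the
midpoint is `½ (t + l₀ • a + l₁ • b) = l₁ • b`. -/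

open scoped RealInnerProductSpace
open Matrix

abbrev E3 := EuclideanSpace ℝ (Fin 3)

/-- Cross product on `EuclideanSpace ℝ (Fin 3)`. -/
noncomputable def cross3 (a b : E3) : E3 :=
  (WithLp.equiv 2 (Fin 3 → ℝ)).symm
    (crossProduct ((WithLp.equiv 2 (Fin 3 → ℝ)) a) ((WithLp.equiv 2 (Fin 3 → ℝ)) b))

lemma cross3_eq_toLp (a b : E3) : cross3 a b = WithLp.toLp 2 (crossProduct a.ofLp b.ofLp) := rfl

lemma cross3_sub_right (a x y : E3) : cross3 a (x - y) = cross3 a x - cross3 a y := by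
  simp only [cross3_eq_toLp, WithLp.ofLp_sub, map_sub, WithLp.toLp_sub]

lemma cross3_smul_right (a x : E3) (c : ℝ) : cross3 a (c • x) = c • cross3 a x := by
  simp only [cross3_eq_toLp, WithLp.ofLp_smul, map_smul, WithLp.toLp_smul]

lemma cross3_self (a : E3) : cross3 a a = 0 := by
  simp only [cross3_eq_toLp, cross_self, WithLp.toLp_zero]

lemma cross3_anticomm (a b : E3) : cross3 a b = -cross3 b a := by
  simp only [cross3_eq_toLp, ← WithLp.toLp_neg, cross_anticomm]

lemma cross3_left_smul_sub_smul (a b : E3) (c d : ℝ) :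
    cross3 a (c • b - d • a) = c • cross3 a b := by
  rw [cross3_sub_right, cross3_smul_right, cross3_smul_right, cross3_self, smul_zero, sub_zero]

lemma cross3_right_smul_sub_smul (a b : E3) (c d : ℝ) :
    cross3 b (c • b - d • a) = d • cross3 a b := by
  rw [cross3_sub_right, cross3_smul_right, cross3_smul_right, cross3_self, cross3_anticomm b a]
  module

lemma norm_smul_div_norm_of_nonneg {V : Type*} [NormedAddCommGroup V] [NormedSpace ℝ V]
    {c : ℝ} {v : V} (hc : 0 ≤ c) (hv : v ≠ 0) : ‖c • v‖ / ‖v‖ = c := by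
  rw [norm_smul_of_nonneg hc, mul_div_cancel_right₀ c (norm_ne_zero_iff.mpr hv)]

theorem stmt_5_general (a b t : E3) (hab : cross3 a b ≠ 0)
    (l₀ l₁ : ℝ) (h₀ : 0 < l₀) (h₁ : 0 < l₁) (hint : t + l₀ • a = l₁ • b) :
    (1 / 2 : ℝ) • (t + (‖cross3 b t‖ / ‖cross3 a b‖) • a +
      (‖cross3 a t‖ / ‖cross3 a b‖) • b) = l₁ • b := by
  obtain rfl : t = l₁ • b - l₀ • a := eq_sub_of_add_eq hint
  rw [cross3_right_smul_sub_smul, cross3_left_smul_sub_smul,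
    norm_smul_div_norm_of_nonneg h₀.le hab, norm_smul_div_norm_of_nonneg h₁.le hab]
  module

theorem stmt_5 (a b t : E3) (ha : ‖a‖ = 1) (hb : ‖b‖ = 1) (hab : cross3 a b ≠ 0)
    (l₀ l₁ : ℝ) (h₀ : 0 < l₀) (h₁ : 0 < l₁) (hint : t + l₀ • a = l₁ • b) :
    (1 / 2 : ℝ) • (t + (‖cross3 b t‖ / ‖cross3 a b‖) • a +
      (‖cross3 a t‖ / ‖cross3 a b‖) • b) = l₁ • b :=
  stmt_5_general a b t hab l₀ l₁ h₀ h₁ hint
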